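/- Let S : [A₀, ∞) → [0, ∞) be a function with S(A) → 0 as A → ∞. Suppose there exist α, β ∈ (0,1) and p, ω > 0 with pα + β > 1, and a constant C > 0, such that S(A) ≤ C (S(A^β) S(A^α)^p + A^{-ω}) for all sufficiently large A. Then there exists a constant C' such that S(A) ≤ C' A^{-ω} for all sufficiently large A. -/

import Mathlib

/-!
In the logarithmic variable `f x = S (exp x)` the recurrence reads
`f x ≤ C * (f (β * x) * f (α * x) ^ p + exp (-(ω * x)))`. Since `f → 0`, a bound
`f x ≤ K * exp (-(θ * x))` with small `θ > 0` propagates from the range where `f` is already small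
to all large `x`: the arguments `α * x`, `β * x` are at most `max α β * x`, and the product term
gains the factor `exp (-((p * α + β - 1) * θ * x))`. Once `f = O(exp (-(σ * x)))`, the recurrence
improves this to `f = O(exp (-(min ((p * α + β) * σ) ω * x)))`; as `p * α + β > 1`, finitely many
improvements reach the exponent `ω`.
-/

open Filter Asymptotics Real Set Topology

theorem forall_ge_induction_of_contraction {P : ℝ → Prop} {X γ : ℝ} (hX : 0 < X)
    (hγ₀ : 0 ≤ γ) (hγ₁ : γ < 1)
    (h : ∀ x, X ≤ x → (∀ y, X ≤ y → y ≤ γ * x → P y) → P x) : ∀ x, X ≤ x → P x := by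
  have hn : ∀ n : ℕ, ∀ x, X ≤ x → x * γ ^ n ≤ X → P x := by
    intro n
    induction n with
    | zero =>
      refine fun x hx hxX => h x hx fun y hy hyx => absurd (hy.trans hyx) ?_
      rw [pow_zero, mul_one] at hxX
      nlinarith
    | succ n ih =>
      refine fun x hx hxX => h x hx fun y hy hyx => ih y hy ?_
      calc y * γ ^ n ≤ γ * x * γ ^ n := by gcongr
        _ = x * γ ^ (n + 1) := by ring
        _ ≤ X := hxX
  intro x hx
  have hx0 : 0 < x := hX.trans_le hx
  obtain ⟨n, hn'⟩ := ((tendsto_pow_atTop_nhds_zero_of_lt_one hγ₀ hγ₁).eventually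
    (ge_mem_nhds (div_pos hX hx0))).exists
  exact hn n x hx (by rwa [le_div_iff₀ hx0, mul_comm] at hn')

theorem exponent_bootstrap {P : ℝ → Prop} {θ L ω : ℝ} (hθ : 0 < θ) (hL : 1 < L) (hω : 0 ≤ ω)
    (hmono : ∀ σ τ, τ ≤ σ → P σ → P τ) (hstep : ∀ σ, P σ → P (min (L * σ) ω)) (hθP : P θ) :
    P ω := by
  have hn : ∀ n : ℕ, P (min (θ * L ^ n) ω) := by
    intro n
    induction n with
    | zero => exact hmono θ _ (by simp) hθP
    | succ n ih =>
      refine hmono _ _ ?_ (hstep _ ih)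
      rw [mul_min_of_nonneg _ _ (by linarith), pow_succ]
      refine le_min (min_le_min ?_ ?_) (min_le_right _ _)
      · linarith
      · exact le_mul_of_one_le_left hω hL.le
  obtain ⟨n, hn'⟩ := ((tendsto_pow_atTop_atTop_of_one_lt hL).eventually_ge_atTop (ω / θ)).exists
  rw [div_le_iff₀ hθ, mul_comm] at hn'
  simpa [min_eq_right hn'] using hn n

theorem Asymptotics.IsBigO.of_nonneg_of_le {f g : ℝ → ℝ} {l : Filter ℝ} (hf : 0 ≤ᶠ[l] f)
    (h : f ≤ᶠ[l] g) : f =O[l] g :=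
  IsBigO.of_norm_eventuallyLE <| by
    filter_upwards [hf, h] with x h0 h1
    rwa [Real.norm_of_nonneg h0]

theorem isBigO_exp_neg_mul_of_le {σ τ : ℝ} (h : τ ≤ σ) :
    (fun x => exp (-(σ * x))) =O[atTop] fun x => exp (-(τ * x)) :=
  IsBigO.of_bound' <| by
    filter_upwards [eventually_ge_atTop 0] with x hx
    simp only [Real.norm_eq_abs, abs_exp, exp_le_exp, neg_le_neg_iff]
    exact mul_le_mul_of_nonneg_right h hx

variable {f : ℝ → ℝ} {α β p C ω : ℝ}

theorem isBigO_exp_min_of_recurrence {σ : ℝ} (hα : 0 < α) (hβ : 0 < β) (hp : 0 ≤ p)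
    (hf0 : 0 ≤ᶠ[atTop] f)
    (hrec : f ≤ᶠ[atTop] fun x => C * (f (β * x) * f (α * x) ^ p + exp (-(ω * x))))
    (hσ : f =O[atTop] fun x => exp (-(σ * x))) :
    f =O[atTop] fun x => exp (-(min ((p * α + β) * σ) ω * x)) := by
  have hprod : (fun x => f (β * x) * f (α * x) ^ p) =O[atTop]
      fun x => exp (-((p * α + β) * σ * x)) := by
    have hfβ := hσ.comp_tendsto (tendsto_id.const_mul_atTop hβ)
    have hfα := (hσ.comp_tendsto (tendsto_id.const_mul_atTop hα)).rpow hp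
      (Eventually.of_forall fun x => (exp_pos _).le)
    refine (hfβ.mul hfα).congr_right fun x => ?_
    simp only [Function.comp_apply, id, ← exp_mul, ← exp_add]
    ring_nf
  refine (IsBigO.of_nonneg_of_le hf0 hrec).trans (IsBigO.const_mul_left ?_ C)
  exact (hprod.trans (isBigO_exp_neg_mul_of_le (min_le_left _ _))).add
    (isBigO_exp_neg_mul_of_le (min_le_right _ _))

theorem mul_rpow_le_of_le_exp {a b K θ x : ℝ} (hK : 0 ≤ K) (hp : 0 ≤ p) (ha₀ : 0 ≤ a)
    (ha : a ≤ K * exp (-(θ * (α * x)))) (hb : b ≤ K * exp (-(θ * (β * x)))) :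
    b * a ^ p ≤ K * K ^ p * exp (-((p * α + β) * θ * x)) :=
  calc b * a ^ p ≤ K * exp (-(θ * (β * x))) * (K * exp (-(θ * (α * x)))) ^ p := by gcongr
    _ = K * K ^ p * exp (-((p * α + β) * θ * x)) := by
      rw [mul_rpow hK (exp_pos _).le, ← exp_mul, mul_mul_mul_comm, ← exp_add]
      ring_nf

theorem mul_add_exp_le_mul_exp {K L c θ x : ℝ} (hC : 0 ≤ C) (hCK : 2 * C ≤ K) (hL : 1 ≤ L)
    (hc : C * K ^ p * exp (-((L - 1) * c)) ≤ 1 / 2) (hcx : c ≤ θ * x) (hθx : θ * x ≤ ω * x) :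
    C * (K * K ^ p * exp (-(L * θ * x)) + exp (-(ω * x))) ≤ K * exp (-(θ * x)) := by
  have hK : 0 ≤ K := by linarith
  have hsmall : C * K ^ p * exp (-((L - 1) * (θ * x))) ≤ 1 / 2 :=
    le_trans (by gcongr) hc
  have hsplit : exp (-(L * θ * x)) = exp (-((L - 1) * (θ * x))) * exp (-(θ * x)) := by
    rw [← exp_add]; ring_nf
  have hω : exp (-(ω * x)) ≤ exp (-(θ * x)) := exp_le_exp.2 (neg_le_neg hθx)
  calc C * (K * K ^ p * exp (-(L * θ * x)) + exp (-(ω * x)))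
      = C * K ^ p * exp (-((L - 1) * (θ * x))) * (K * exp (-(θ * x)))
        + C * exp (-(ω * x)) := by rw [hsplit]; ring
    _ ≤ 1 / 2 * (K * exp (-(θ * x))) + K / 2 * exp (-(θ * x)) := by
      gcongr
      linarith
    _ = K * exp (-(θ * x)) := by ring

theorem exists_isBigO_exp_of_recurrence (hα : α ∈ Ioo 0 1) (hβ : β ∈ Ioo 0 1) (hp : 0 ≤ p)
    (hC : 0 ≤ C) (hω : 0 < ω) (hL : 1 < p * α + β) (hf0 : 0 ≤ᶠ[atTop] f)
    (hlim : Tendsto f atTop (𝓝 0))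
    (hrec : f ≤ᶠ[atTop] fun x => C * (f (β * x) * f (α * x) ^ p + exp (-(ω * x)))) :
    ∃ θ > 0, f =O[atTop] fun x => exp (-(θ * x)) := by
  set L := p * α + β
  set K := max (2 * C) 1
  have hK : 0 < K := lt_max_of_lt_right one_pos
  have hμ : 0 < min α β := lt_min hα.1 hβ.1
  obtain ⟨c, hc₀, hc⟩ : ∃ c > 0, C * K ^ p * exp (-((L - 1) * c)) ≤ 1 / 2 := by
    have hlim₀ : Tendsto (fun c => C * K ^ p * exp (-((L - 1) * c))) atTop (𝓝 0) := by
      simpa using (tendsto_exp_neg_atTop_nhds_zero.comp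
        (tendsto_id.const_mul_atTop (sub_pos.2 hL))).const_mul (C * K ^ p)
    exact ((eventually_gt_atTop 0).and (hlim₀.eventually (ge_mem_nhds (by norm_num)))).exists
  have hsmall : ∀ᶠ x in atTop, f x ≤ K * exp (-(c / min α β)) :=
    hlim.eventually (ge_mem_nhds (by positivity))
  obtain ⟨X, hX, hXω, hX₀⟩ := ((eventually_forall_ge_atTop.2 (hf0.and (hrec.and hsmall))).and
    ((eventually_ge_atTop (c / ω)).and (eventually_gt_atTop 0))).exists
  -- With `θ = c / X`, on `x < X / min α β` the target bound is weaker than `hsmall`, while for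
  -- `x ≥ X` the product term gains the factor `exp (-((L - 1) * θ * x)) ≤ exp (-((L - 1) * c))`.
  set θ := c / X
  have hθω : θ ≤ ω := by rwa [div_le_iff₀ hX₀, ← div_le_iff₀' hω]
  have key : ∀ x, X ≤ x → f x ≤ K * exp (-(θ * x)) := by
    refine forall_ge_induction_of_contraction hX₀ (hα.1.le.trans (le_max_left α β))
      (max_lt hα.2 hβ.2) fun x hx ih => ?_
    obtain ⟨-, hrecx, hsmallx⟩ := hX x hx
    have hx₀ : 0 < x := hX₀.trans_le hx
    rcases lt_or_ge (min α β * x) X with hμx | hμx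
    · refine hsmallx.trans (mul_le_mul_of_nonneg_left (exp_le_exp.2 ?_) hK.le)
      rw [neg_le_neg_iff, div_mul_eq_mul_div, div_le_div_iff₀ hX₀ hμ]
      nlinarith
    have hαx : X ≤ α * x := hμx.trans (by gcongr; exact min_le_left _ _)
    have hβx : X ≤ β * x := hμx.trans (by gcongr; exact min_le_right _ _)
    have hfα := ih (α * x) hαx (by gcongr; exact le_max_left _ _)
    have hfβ := ih (β * x) hβx (by gcongr; exact le_max_right _ _)
    calc f x ≤ C * (f (β * x) * f (α * x) ^ p + exp (-(ω * x))) := hrecx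
      _ ≤ C * (K * K ^ p * exp (-(L * θ * x)) + exp (-(ω * x))) :=
        mul_le_mul_of_nonneg_left
          (add_le_add_left (mul_rpow_le_of_le_exp hK.le hp (hX _ hαx).1 hfα hfβ) _) hC
      _ ≤ K * exp (-(θ * x)) :=
        mul_add_exp_le_mul_exp hC (le_max_left _ _) hL.le hc
          (by rw [div_mul_eq_mul_div, le_div_iff₀ hX₀]; gcongr) (by gcongr)
  refine ⟨θ, div_pos hc₀ hX₀, (IsBigO.of_nonneg_of_le hf0 ?_).trans (isBigO_const_mul_self K _ _)⟩
  filter_upwards [eventually_ge_atTop X] using key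

theorem exists_le_rpow_of_isBigO_exp {S : ℝ → ℝ}
    (h : (fun x => S (exp x)) =O[atTop] fun x => exp (-(ω * x))) :
    ∃ C' : ℝ, ∀ᶠ A in atTop, S A ≤ C' * A ^ (-ω) := by
  obtain ⟨C', hC'⟩ := h.bound
  refine ⟨C', ?_⟩
  filter_upwards [tendsto_log_atTop.eventually hC', eventually_gt_atTop 0] with A hA hA₀
  have hpow : A ^ (-ω) = exp (-(ω * log A)) := by rw [rpow_def_of_pos hA₀]; ring_nf
  rw [hpow]
  simpa [exp_log hA₀] using (le_abs_self _).trans hA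

theorem decay_lemma_general (A₀ : ℝ) (S : ℝ → ℝ)
    (hS0 : ∀ A, A₀ ≤ A → 0 ≤ S A)
    (hlim : Tendsto S atTop (nhds 0))
    (α β p ω C : ℝ) (hα : α ∈ Set.Ioo (0 : ℝ) 1) (hβ : β ∈ Set.Ioo (0 : ℝ) 1)
    (hp : 0 < p) (hω : 0 < ω) (hC : 0 < C) (hpαβ : 1 < p * α + β)
    (hrec : ∀ᶠ A in atTop, S A ≤ C * (S (A ^ β) * S (A ^ α) ^ p + A ^ (-ω))) :
    ∃ C' : ℝ, ∀ᶠ A in atTop, S A ≤ C' * A ^ (-ω) := by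
  set f := fun x => S (exp x)
  have hf0 : 0 ≤ᶠ[atTop] f := tendsto_exp_atTop.eventually (eventually_atTop.2 ⟨A₀, hS0⟩)
  have hflim : Tendsto f atTop (𝓝 0) := hlim.comp tendsto_exp_atTop
  have hfrec : f ≤ᶠ[atTop] fun x => C * (f (β * x) * f (α * x) ^ p + exp (-(ω * x))) := by
    filter_upwards [tendsto_exp_atTop.eventually hrec] with x hx
    simpa only [f, ← exp_mul, mul_comm x, neg_mul] using hx
  obtain ⟨θ, hθ, hθf⟩ :=
    exists_isBigO_exp_of_recurrence hα hβ hp.le hC.le hω hpαβ hf0 hflim hfrec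
  exact exists_le_rpow_of_isBigO_exp (exponent_bootstrap
    (P := fun σ => f =O[atTop] fun x => exp (-(σ * x))) hθ hpαβ hω.le
    (fun σ τ hτ hσ => hσ.trans (isBigO_exp_neg_mul_of_le hτ))
    (fun σ hσ => isBigO_exp_min_of_recurrence hα.1 hβ.1 hp.le hf0 hfrec hσ) hθf)

theorem decay_lemma (A₀ : ℝ) (hA₀ : 1 < A₀) (S : ℝ → ℝ)
    (hS0 : ∀ A, A₀ ≤ A → 0 ≤ S A)
    (hlim : Tendsto S atTop (nhds 0))
    (α β p ω C : ℝ) (hα : α ∈ Set.Ioo (0 : ℝ) 1) (hβ : β ∈ Set.Ioo (0 : ℝ) 1)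
    (hp : 0 < p) (hω : 0 < ω) (hC : 0 < C) (hpαβ : 1 < p * α + β)
    (hrec : ∀ᶠ A in atTop, S A ≤ C * (S (A ^ β) * S (A ^ α) ^ p + A ^ (-ω))) :
    ∃ C' : ℝ, ∀ᶠ A in atTop, S A ≤ C' * A ^ (-ω) :=
  decay_lemma_general A₀ S hS0 hlim α β p ω C hα hβ hp hω hC hpαβ hrec
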